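/- Let $Q = \mathbb{R}^n$ and $H_{d+} : \mathbb{R}^n \times \mathbb{R}^n \to \mathbb{R}$ be smooth. A sequence $(q_k, p_k)_{k=0}^N$ in $T^*Q$ is a stationary point of the sum $\sum_{k=0}^{N-1} [p_{k+1}\cdot q_{k+1} - H_{d+}(q_k, p_{k+1})]$ with respect to variations $\delta q_k, \delta p_k$ with $\delta q_0 = \delta q_N = 0$ if and only if the $(+)$-discrete Hamilton's equations hold: $q_{k+1} = D_2H_{d+}(q_k,p_{k+1})$ for $k = 0, \ldots, N-1$ and $p_k = D_1H_{d+}(q_k,p_{k+1})$ for $k = 1, \ldots, N-1$. -/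

import Mathlib

open scoped RealInnerProductSpace
noncomputable section
abbrev V (n : ℕ) := EuclideanSpace ℝ (Fin n)
def D1 {n : ℕ} (H : V n → V n → ℝ) (a b : V n) : V n := gradient (fun x => H x b) a
def D2 {n : ℕ} (H : V n → V n → ℝ) (a b : V n) : V n := gradient (fun x => H a x) b

lemma inner_gradient {n : ℕ} (f : V n → ℝ) (a u : V n) :
    ⟪gradient f a, u⟫ = fderiv ℝ f a u := by
  rw [gradient]; exact InnerProductSpace.toDual_symm_apply

lemma hasDerivAt_H {n : ℕ} (H : V n → V n → ℝ)
    (hH : ContDiff ℝ (⊤ : ℕ∞) (fun x : V n × V n => H x.1 x.2)) (a b u v : V n) :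
    HasDerivAt (fun t : ℝ => H (a + t • u) (b + t • v))
      (⟪D1 H a b, u⟫ + ⟪D2 H a b, v⟫) 0 := by
  set F : V n × V n → ℝ := fun x => H x.1 x.2 with hF
  have hγ : HasDerivAt (fun t : ℝ => (a + t • u, b + t • v)) ((u, v) : V n × V n) 0 := by
    have h1 : HasDerivAt (fun t : ℝ => a + t • u) u 0 := by
      simpa using ((hasDerivAt_id (0:ℝ)).smul_const u).const_add a
    have h2 : HasDerivAt (fun t : ℝ => b + t • v) v 0 := by
      simpa using ((hasDerivAt_id (0:ℝ)).smul_const v).const_add b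
    exact h1.prodMk h2
  have hFd : DifferentiableAt ℝ F (a, b) := (hH.differentiable (by simp)) _
  have hD : HasDerivAt (fun t : ℝ => H (a + t • u) (b + t • v))
      (fderiv ℝ F (a, b) (u, v)) 0 := by
    have h : HasFDerivAt F (fderiv ℝ F (a, b)) ((fun t : ℝ => (a + t • u, b + t • v)) 0) := by
      simpa using hFd.hasFDerivAt
    exact h.comp_hasDerivAt 0 hγ
  convert hD using 1
  have h1 : HasFDerivAt (fun x : V n => H x b)
      ((fderiv ℝ F (a, b)).comp ((ContinuousLinearMap.id ℝ (V n)).prod 0)) a :=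
    hFd.hasFDerivAt.comp (f := fun x : V n => (x, b)) a ((hasFDerivAt_id a).prodMk (hasFDerivAt_const b a))
  have h2 : HasFDerivAt (fun y : V n => H a y)
      ((fderiv ℝ F (a, b)).comp ((0 : V n →L[ℝ] V n).prod (ContinuousLinearMap.id ℝ (V n)))) b :=
    hFd.hasFDerivAt.comp b ((hasFDerivAt_const a b).prodMk (hasFDerivAt_id b))
  rw [D1, D2, inner_gradient, inner_gradient, h1.fderiv, h2.fderiv]
  simp only [ContinuousLinearMap.comp_apply, ContinuousLinearMap.prod_apply,
    ContinuousLinearMap.id_apply, ContinuousLinearMap.zero_apply]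
  rw [← map_add]
  simp [Prod.mk_add_mk]

lemma deriv_formula {n N : ℕ} (H : V n → V n → ℝ)
    (hH : ContDiff ℝ (⊤ : ℕ∞) (fun x : V n × V n => H x.1 x.2))
    (q p δq δp : ℕ → V n) :
    deriv (fun t : ℝ => ∑ k ∈ Finset.range N,
        (⟪p (k + 1) + t • δp (k + 1), q (k + 1) + t • δq (k + 1)⟫
          - H (q k + t • δq k) (p (k + 1) + t • δp (k + 1)))) 0
    = ∑ k ∈ Finset.range N,
        (⟪δp (k + 1), q (k + 1)⟫ + ⟪p (k + 1), δq (k + 1)⟫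
          - (⟪D1 H (q k) (p (k + 1)), δq k⟫ + ⟪D2 H (q k) (p (k + 1)), δp (k + 1)⟫)) := by
  have h : HasDerivAt (fun t : ℝ => ∑ k ∈ Finset.range N,
        (⟪p (k + 1) + t • δp (k + 1), q (k + 1) + t • δq (k + 1)⟫
          - H (q k + t • δq k) (p (k + 1) + t • δp (k + 1))))
      (∑ k ∈ Finset.range N,
        (⟪δp (k + 1), q (k + 1)⟫ + ⟪p (k + 1), δq (k + 1)⟫
          - (⟪D1 H (q k) (p (k + 1)), δq k⟫ + ⟪D2 H (q k) (p (k + 1)), δp (k + 1)⟫))) 0 := by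
    apply HasDerivAt.fun_sum
    intro k _
    have hp : HasDerivAt (fun t : ℝ => p (k + 1) + t • δp (k + 1)) (δp (k + 1)) 0 := by
      simpa using ((hasDerivAt_id (0:ℝ)).smul_const (δp (k+1))).const_add (p (k+1))
    have hq : HasDerivAt (fun t : ℝ => q (k + 1) + t • δq (k + 1)) (δq (k + 1)) 0 := by
      simpa using ((hasDerivAt_id (0:ℝ)).smul_const (δq (k+1))).const_add (q (k+1))
    have hinner := hp.inner ℝ hq
    simp only [zero_smul, add_zero] at hinner
    have h' := hinner.fun_sub (hasDerivAt_H H hH (q k) (p (k+1)) (δq k) (δp (k+1)))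
    convert h' using 1
    ring
  exact h.deriv

/-- The `(+)`-discrete Hamilton's phase space principle: `(q_k, p_k)` is a stationary
point of `∑_{k=0}^{N-1} [p_{k+1}·q_{k+1} - H_{d+}(q_k, p_{k+1})]` with respect to
variations `δq_k, δp_k` with `δq_0 = δq_N = 0` if and only if the `(+)`-discrete
Hamilton's equations hold: `q_{k+1} = D₂H_{d+}(q_k,p_{k+1})` for `k = 0,…,N-1` and
`p_k = D₁H_{d+}(q_k,p_{k+1})` for `k = 1,…,N-1`. -/
theorem discrete_Hamilton_phase_space_principle (n N : ℕ) (H : V n → V n → ℝ)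
    (hH : ContDiff ℝ (⊤ : ℕ∞) (fun x : V n × V n => H x.1 x.2))
    (q p : ℕ → V n) :
    (∀ δq δp : ℕ → V n, δq 0 = 0 → δq N = 0 →
      deriv (fun t : ℝ => ∑ k ∈ Finset.range N,
        (⟪p (k + 1) + t • δp (k + 1), q (k + 1) + t • δq (k + 1)⟫
          - H (q k + t • δq k) (p (k + 1) + t • δp (k + 1)))) 0 = 0)
    ↔ ((∀ k < N, q (k + 1) = D2 H (q k) (p (k + 1))) ∧
       (∀ k, 1 ≤ k → k < N → p k = D1 H (q k) (p (k + 1)))) := by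
  constructor
  · intro hvar
    constructor
    · intro k hk
      set w := q (k + 1) - D2 H (q k) (p (k + 1)) with hw
      have h := hvar (fun _ => 0) (fun j => if j = k + 1 then w else 0) rfl rfl
      rw [deriv_formula H hH q p (fun _ => 0) (fun j => if j = k + 1 then w else 0)] at h
      simp only [inner_zero_right, add_zero, zero_add] at h
      rw [Finset.sum_eq_single_of_mem k (Finset.mem_range.mpr hk)] at h
      · simp only [if_pos rfl, if_true] at h
        have hww : ⟪w, w⟫ = (0:ℝ) := by
          have e : ⟪w, w⟫ = ⟪w, q (k+1)⟫ - ⟪w, D2 H (q k) (p (k+1))⟫ := by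
            rw [← inner_sub_right, ← hw]
          rw [e, real_inner_comm (D2 H (q k) (p (k+1))) w]
          exact h
        have := inner_self_eq_zero.mp hww
        rw [hw] at this
        exact sub_eq_zero.mp this
      · intro b _ hb
        simp [hb]
    · intro k hk1 hk
      obtain ⟨m, rfl⟩ : ∃ m, k = m + 1 := ⟨k - 1, (Nat.succ_pred_eq_of_pos hk1).symm⟩
      set w := p (m + 1) - D1 H (q (m + 1)) (p (m + 1 + 1)) with hw
      have h := hvar (fun j => if j = m + 1 then w else 0) (fun _ => 0)
        (by simp) (by simp; omega)
      rw [deriv_formula H hH q p (fun j => if j = m + 1 then w else 0) (fun _ => 0)] at h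
      simp only [inner_zero_left, inner_zero_right, zero_add, add_zero, zero_sub, sub_zero] at h
      rw [Finset.sum_sub_distrib,
        Finset.sum_eq_single_of_mem m (Finset.mem_range.mpr (by omega)),
        Finset.sum_eq_single_of_mem (m + 1) (Finset.mem_range.mpr hk)] at h
      · simp only [if_pos rfl, if_true] at h
        have hww : ⟪w, w⟫ = (0:ℝ) := by
          have e : ⟪w, w⟫ = ⟪p (m+1), w⟫ - ⟪D1 H (q (m+1)) (p (m+1+1)), w⟫ := by
            rw [← inner_sub_left, ← hw]
          rw [e]; exact h
        have := inner_self_eq_zero.mp hww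
        rw [hw] at this
        exact sub_eq_zero.mp this
      · intro b _ hb
        simp [hb]
      · intro b _ hb
        simp [hb]
  · rintro ⟨h1, h2⟩ δq δp hq0 hqN
    rw [deriv_formula H hH]
    have step : ∀ k ∈ Finset.range N,
        (⟪δp (k + 1), q (k + 1)⟫ + ⟪p (k + 1), δq (k + 1)⟫
          - (⟪D1 H (q k) (p (k + 1)), δq k⟫ + ⟪D2 H (q k) (p (k + 1)), δp (k + 1)⟫))
        = ⟪p (k+1), δq (k+1)⟫ - ⟪p k, δq k⟫ := by
      intro k hk
      rw [Finset.mem_range] at hk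
      rw [h1 k hk]
      rcases Nat.eq_zero_or_pos k with rfl | hkpos
      · rw [hq0, inner_zero_right, inner_zero_right, real_inner_comm (δp (0 + 1))]
        ring
      · rw [← h2 k hkpos hk, real_inner_comm (δp (k+1))]
        ring
    rw [Finset.sum_congr rfl step, Finset.sum_range_sub (fun j => ⟪p j, δq j⟫), hq0, hqN]
    simp
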